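/- arXiv:2501.06463 — 4 statements merged into one kernel-verified Lean document; each statement's English description precedes it below -/
import Mathlib

section
/- Let n ≥ 2 and let φ : Z → R be positive-valued with φ(k+1) ≥ n·φ(k) > 0 for all k ∈ Z. Define Φ(x) = Σ_{i=1}^n φ(x_i) for x ∈ Z^n. Then for any x, y ∈ Z^n, x <_dec y if and only if Φ(x) < Φ(y). -/
open Finset

/-- Descending rearrangement of a tuple. -/
noncomputable def sortDesc {n : ℕ} {α : Type*} [LinearOrder α] (x : Fin n → α) : Fin n → α :=
  x ∘ (Tuple.sort (fun i => OrderDual.toDual (x i)))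

/-- `x <_dec y` : strict lexicographic comparison of descending rearrangements. -/
noncomputable def decLT {n : ℕ} {α : Type*} [LinearOrder α] (x y : Fin n → α) : Prop :=
  ∃ i : Fin n, (∀ j : Fin n, j < i → sortDesc x j = sortDesc y j) ∧ sortDesc x i < sortDesc y i

/-- `x ≤_dec y` : lexicographic comparison of descending rearrangements. -/
noncomputable def decLE {n : ℕ} {α : Type*} [LinearOrder α] (x y : Fin n → α) : Prop :=
  sortDesc x = sortDesc y ∨ decLT x y

/-- `x` is a decreasingly minimal (dec-min) element of `S`. -/
noncomputable def DecMin {n : ℕ} (S : Set (Fin n → ℤ)) (x : Fin n → ℤ) : Prop :=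
  x ∈ S ∧ ∀ y ∈ S, decLE x y

/-- Embedding of integer vectors into real vectors. -/
def castVec {n : ℕ} (z : Fin n → ℤ) : Fin n → ℝ := fun i => (z i : ℝ)

/-- `S ⊆ ℤⁿ` is an integrally convex set: every point of `conv S` lies in the
convex hull of the points of `S` in its integral neighborhood. -/
def IntConvexSet {n : ℕ} (S : Set (Fin n → ℤ)) : Prop :=
  S.Nonempty ∧ ∀ x : Fin n → ℝ,
    x ∈ convexHull ℝ (castVec '' S) →
    x ∈ convexHull ℝ (castVec '' {z ∈ S | ∀ i, |x i - (z i : ℝ)| < 1})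

lemma antitone_sortDesc {n : ℕ} (x : Fin n → ℤ) : Antitone (sortDesc x) := by
  intro j k hjk
  exact Tuple.monotone_sort (fun i => OrderDual.toDual (x i)) hjk

lemma sum_sortDesc {n : ℕ} (φ : ℤ → ℝ) (x : Fin n → ℤ) :
    ∑ i, φ (sortDesc x i) = ∑ i, φ (x i) :=
  Equiv.sum_comp (Tuple.sort (fun i => OrderDual.toDual (x i))) (fun j => φ (x j))

lemma tri {n : ℕ} (a b : Fin n → ℤ) :
    a = b ∨ (∃ i, (∀ j, j < i → a j = b j) ∧ a i < b i) ∨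
      (∃ i, (∀ j, j < i → b j = a j) ∧ b i < a i) := by
  classical
  by_cases h : a = b
  · exact Or.inl h
  right
  have hne : (Finset.univ.filter (fun j => a j ≠ b j)).Nonempty := by
    rcases Function.ne_iff.mp h with ⟨i, hi⟩
    exact ⟨i, by simp [hi]⟩
  set D := Finset.univ.filter (fun j => a j ≠ b j) with hD
  set i := D.min' hne with hi
  have hmem : a i ≠ b i := by
    have := D.min'_mem hne
    simp [hD] at this
    exact this
  have hpre : ∀ j, j < i → a j = b j := by
    intro j hj
    by_contra hne'
    exact absurd (D.min'_le j (by simp [hD, hne'])) (not_le.mpr hj)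
  rcases hmem.lt_or_gt with h1 | h1
  · exact Or.inl ⟨i, hpre, h1⟩
  · exact Or.inr ⟨i, fun j hj => (hpre j hj).symm, h1⟩

lemma key {n : ℕ} (φ : ℤ → ℝ) (hpos : ∀ k : ℤ, 0 < φ k)
    (hrap : ∀ k : ℤ, (n : ℝ) * φ k ≤ φ (k + 1)) (hn : 2 ≤ n)
    (a b : Fin n → ℤ) (ha : Antitone a) (i : Fin n)
    (hpre : ∀ j, j < i → a j = b j) (hi : a i < b i) :
    ∑ j, φ (a j) < ∑ j, φ (b j) := by
  classical
  have hmono : StrictMono φ := by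
    apply strictMono_int_of_lt_succ
    intro k
    calc φ k < 2 * φ k := by linarith [hpos k]
    _ ≤ (n : ℝ) * φ k := by
        have : (2 : ℝ) ≤ n := by exact_mod_cast hn
        nlinarith [hpos k]
    _ ≤ φ (k + 1) := hrap k
  set T := Finset.univ.filter (fun j => ¬ j < i) with hT
  have hiT : i ∈ T := by simp [hT]
  have hsplit : ∀ c : Fin n → ℤ,
      ∑ j, φ (c j) = ∑ j ∈ Finset.univ.filter (fun j => j < i), φ (c j) + ∑ j ∈ T, φ (c j) :=
    fun c => (Finset.sum_filter_add_sum_filter_not _ _ _).symm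
  have hpreeq : ∑ j ∈ Finset.univ.filter (fun j => j < i), φ (a j)
      = ∑ j ∈ Finset.univ.filter (fun j => j < i), φ (b j) := by
    apply Finset.sum_congr rfl
    intro j hj
    rw [hpre j (by simpa using hj)]
  rw [hsplit a, hsplit b, hpreeq]
  have hsuffix : ∑ j ∈ T, φ (a j) < ∑ j ∈ T, φ (b j) := by
    set s := T.erase i with hs
    have hTa : ∑ j ∈ T, φ (a j) = φ (a i) + ∑ j ∈ s, φ (a j) :=
      (Finset.add_sum_erase T _ hiT).symm
    have hTb : ∑ j ∈ T, φ (b j) = φ (b i) + ∑ j ∈ s, φ (b j) :=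
      (Finset.add_sum_erase T _ hiT).symm
    have hbound : ∀ j ∈ s, φ (a j) ≤ φ (a i) := by
      intro j hj
      have hjT : j ∈ T := Finset.mem_of_mem_erase hj
      have hji : i ≤ j := le_of_not_gt (by simpa [hT] using hjT)
      exact hmono.monotone (ha hji)
    have hcard : s.card + 1 ≤ n := by
      have : s.card < T.card := Finset.card_erase_lt_of_mem hiT
      have h2 : T.card ≤ n := by
        simpa using Finset.card_le_card (Finset.subset_univ T)
      omega
    rcases eq_or_ne s ∅ with hse | hse
    · rw [hTa, hTb, hse]
      simp only [Finset.sum_empty, add_zero]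
      exact hmono hi
    · have hsne : s.Nonempty := Finset.nonempty_iff_ne_empty.mpr hse
      have h1 : ∑ j ∈ s, φ (a j) ≤ s.card * φ (a i) := by
        calc ∑ j ∈ s, φ (a j) ≤ ∑ _j ∈ s, φ (a i) := Finset.sum_le_sum hbound
        _ = s.card * φ (a i) := by rw [Finset.sum_const]; ring
      have h2 : ((s.card : ℝ) + 1) * φ (a i) ≤ (n : ℝ) * φ (a i) := by
        have : ((s.card : ℝ) + 1) ≤ n := by exact_mod_cast hcard
        nlinarith [hpos (a i)]
      have h3 : φ (a i + 1) ≤ φ (b i) := hmono.monotone (by omega)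
      have h4 : (0 : ℝ) < ∑ j ∈ s, φ (b j) :=
        Finset.sum_pos (fun j _ => hpos _) hsne
      have := hrap (a i)
      rw [hTa, hTb]
      nlinarith
  linarith

theorem decLT_iff_rapid_sum_lt (n : ℕ) (hn : 2 ≤ n) (φ : ℤ → ℝ)
    (hpos : ∀ k : ℤ, 0 < φ k)
    (hrap : ∀ k : ℤ, (n : ℝ) * φ k ≤ φ (k + 1))
    (x y : Fin n → ℤ) :
    decLT x y ↔ ∑ i, φ (x i) < ∑ i, φ (y i) := by
  have main : ∀ u v : Fin n → ℤ, decLT u v → ∑ i, φ (u i) < ∑ i, φ (v i) := by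
    rintro u v ⟨i, hpre, hi⟩
    rw [← sum_sortDesc φ u, ← sum_sortDesc φ v]
    exact key φ hpos hrap hn _ _ (antitone_sortDesc u) i hpre hi
  constructor
  · exact main x y
  · intro hsum
    rcases tri (sortDesc x) (sortDesc y) with h | h | h
    · exfalso
      have : ∑ i, φ (x i) = ∑ i, φ (y i) := by
        rw [← sum_sortDesc φ x, ← sum_sortDesc φ y, h]
      linarith
    · exact h
    · exfalso
      have := main y x h
      linarith
end

section
/- Let n ≥ 2, let S ⊆ Z^n, and let Φ(x) = Σ_{i=1}^n φ(x_i) with φ : Z → R positive and satisfying φ(k+1) ≥ n·φ(k) for all k ∈ Z. Then the set of decreasingly minimal elements of S equals the set of minimizers of Φ over S, i.e., decmin(S) = argmin(Φ | S). -/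
open Finset

/-!
`Φ` is invariant under rearrangement, so both orders can be compared on descending rearrangements.
If those of `x` and `y` first differ at position `i`, with `x_i < y_i`, the common prefix cancels
and each of the at most `n` remaining entries of `x` is at most `y_i - 1`; rapid growth then gives
`Φ(x) < Φ(y)`. Thus `Φ` is strictly monotone for the total dec-order, so its minimizers are exactly
the dec-minimal elements.
-/

theorem strictMono_of_le_mul_succ {φ : ℤ → ℝ} {c : ℝ} (hc : 1 < c) (hpos : ∀ k, 0 < φ k)
    (hrap : ∀ k, c * φ k ≤ φ (k + 1)) : StrictMono φ :=
  strictMono_int_of_lt_succ fun k => (lt_mul_left (hpos k) hc).trans_le (hrap k)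

theorem sum_lt_sum_of_le_mul_succ {ι : Type*} {n : ℕ} {φ : ℤ → ℝ} (hn : 2 ≤ n)
    (hpos : ∀ k, 0 < φ k) (hrap : ∀ k, (n : ℝ) * φ k ≤ φ (k + 1)) {s : Finset ι} (hs : #s ≤ n)
    {f g : ι → ℤ} {i : ι} (hi : i ∈ s) (hf : ∀ j ∈ s, f j ≤ f i) (hfg : f i < g i) :
    ∑ j ∈ s, φ (f j) < ∑ j ∈ s, φ (g j) := by
  classical
  have hmono : Monotone φ :=
    (strictMono_of_le_mul_succ (by exact_mod_cast hn) hpos hrap).monotone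
  set c := g i - 1
  have hsum_f : ∑ j ∈ s, φ (f j) ≤ #s * φ c := by
    simpa using sum_le_card_nsmul s _ _ fun j hj => hmono ((hf j hj).trans (by omega))
  have hcard : (#s : ℝ) * φ c ≤ n * φ c :=
    mul_le_mul_of_nonneg_right (by exact_mod_cast hs) (hpos c).le
  have hgrowth : (n : ℝ) * φ c ≤ φ (g i) := by simpa [c] using hrap c
  have hsum_g : φ (g i) ≤ ∑ j ∈ s, φ (g j) := single_le_sum (fun j _ => (hpos _).le) hi
  -- strictness: either `s` has an element besides `i`, or `#s < n`
  rcases lt_or_ge 1 #s with hs1 | hs1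
  · have hrest : (s.erase i).Nonempty := by
      rw [← card_pos, card_erase_of_mem hi]; omega
    have : φ (g i) < ∑ j ∈ s, φ (g j) := by
      rw [← add_sum_erase s _ hi]
      linarith [sum_pos (fun j _ => hpos (g j)) hrest]
    linarith
  · have : (#s : ℝ) * φ c < n * φ c :=
      mul_lt_mul_of_pos_right (by exact_mod_cast (by omega : #s < n)) (hpos c)
    linarith

section Dec

variable {n : ℕ} {α : Type*} [LinearOrder α]

theorem sortDesc_antitone (x : Fin n → α) : Antitone (sortDesc x) := fun _ _ hij =>
  Tuple.monotone_sort (fun i => OrderDual.toDual (x i)) hij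

theorem sum_comp_sortDesc {M : Type*} [AddCommMonoid M] (x : Fin n → α) (f : α → M) :
    ∑ i, f (sortDesc x i) = ∑ i, f (x i) :=
  Equiv.sum_comp _ fun i => f (x i)

theorem decLE_iff_toLex_le {x y : Fin n → α} :
    decLE x y ↔ toLex (sortDesc x) ≤ toLex (sortDesc y) := by
  rw [le_iff_eq_or_lt]
  rfl

theorem not_decLE_iff {x y : Fin n → α} : ¬ decLE x y ↔ decLT y x := by
  rw [decLE_iff_toLex_le, not_le]
  rfl

end Dec

section Rapid

variable {n : ℕ} {φ : ℤ → ℝ} {x y : Fin n → ℤ}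

theorem sum_lt_sum_of_decLT (hn : 2 ≤ n) (hpos : ∀ k, 0 < φ k)
    (hrap : ∀ k, (n : ℝ) * φ k ≤ φ (k + 1)) (h : decLT x y) :
    ∑ i, φ (x i) < ∑ i, φ (y i) := by
  obtain ⟨i, hprefix, hi⟩ := h
  rw [← sum_comp_sortDesc x, ← sum_comp_sortDesc y,
    ← sum_filter_add_sum_filter_not univ (· < i),
    ← sum_filter_add_sum_filter_not univ (· < i) (fun j => φ (sortDesc y j))]
  have hprefix_sum : ∑ j with j < i, φ (sortDesc x j) = ∑ j with j < i, φ (sortDesc y j) :=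
    sum_congr rfl fun j hj => by rw [hprefix j (by simpa using hj)]
  rw [hprefix_sum, add_lt_add_iff_left]
  exact sum_lt_sum_of_le_mul_succ hn hpos hrap ((card_le_univ _).trans_eq (Fintype.card_fin n))
    (by simp) (fun j hj => sortDesc_antitone x (by simpa using hj)) hi

theorem sum_le_sum_of_decLE (hn : 2 ≤ n) (hpos : ∀ k, 0 < φ k)
    (hrap : ∀ k, (n : ℝ) * φ k ≤ φ (k + 1)) (h : decLE x y) :
    ∑ i, φ (x i) ≤ ∑ i, φ (y i) := by
  rcases h with heq | hlt
  · rw [← sum_comp_sortDesc x, ← sum_comp_sortDesc y, heq]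
  · exact (sum_lt_sum_of_decLT hn hpos hrap hlt).le

end Rapid

theorem decmin_eq_argmin_rapid (n : ℕ) (hn : 2 ≤ n) (S : Set (Fin n → ℤ)) (φ : ℤ → ℝ)
    (hpos : ∀ k : ℤ, 0 < φ k)
    (hrap : ∀ k : ℤ, (n : ℝ) * φ k ≤ φ (k + 1)) :
    {x | DecMin S x} = {x ∈ S | ∀ y ∈ S, ∑ i, φ (x i) ≤ ∑ i, φ (y i)} := by
  refine Set.ext fun x => and_congr_right fun _ => forall₂_congr fun y _ =>
    ⟨sum_le_sum_of_decLE hn hpos hrap, fun hle => ?_⟩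
  by_contra hdec
  exact (sum_lt_sum_of_decLT hn hpos hrap (not_decLE_iff.mp hdec)).not_ge hle
end

section
/- The set S = {(2,1,0,0), (0,0,1,2)} ⊆ Z^4 has both of its elements dec-min, and their L∞-distance is 2; hence S is not integrally convex. Moreover, the convex hull of S is an integral polyhedron whose integer points are exactly S. -/
open Finset

lemma sortDesc_x : sortDesc (![2, 1, 0, 0] : Fin 4 → ℤ) = ![2, 1, 0, 0] := by
  unfold sortDesc
  rw [Tuple.sort_eq_refl_iff_monotone.mpr (by decide)]
  rfl

lemma sortDesc_y : sortDesc (![0, 0, 1, 2] : Fin 4 → ℤ) = ![2, 1, 0, 0] := by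
  have h := (Tuple.comp_sort_eq_comp_iff_monotone
    (f := fun i => OrderDual.toDual ((![0, 0, 1, 2] : Fin 4 → ℤ) i))
    (σ := Fin.revPerm)).mpr (by decide)
  funext i
  have h2 : (![0, 0, 1, 2] : Fin 4 → ℤ) (Fin.revPerm i) = sortDesc ![0, 0, 1, 2] i :=
    congrArg OrderDual.ofDual (congrFun h i)
  rw [← h2]
  fin_cases i <;> rfl

theorem example_not_integrally_convex (x y : Fin 4 → ℤ)
    (hx : x = ![2, 1, 0, 0]) (hy : y = ![0, 0, 1, 2]) :
    DecMin {x, y} x ∧ DecMin {x, y} y ∧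
    (∀ i, |x i - y i| ≤ 2) ∧ (∃ i, |x i - y i| = 2) ∧
    ¬ IntConvexSet {x, y} ∧
    {z : Fin 4 → ℤ | castVec z ∈ convexHull ℝ (castVec '' ({x, y} : Set (Fin 4 → ℤ)))}
      = {x, y} := by
  subst hx hy
  set x : Fin 4 → ℤ := ![2, 1, 0, 0] with hxdef
  set y : Fin 4 → ℤ := ![0, 0, 1, 2] with hydef
  have hsort : sortDesc x = sortDesc y := by rw [sortDesc_x, sortDesc_y]
  have hdec : ∀ w ∈ ({x, y} : Set (Fin 4 → ℤ)), ∀ z ∈ ({x, y} : Set (Fin 4 → ℤ)), decLE w z := by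
    rintro w (rfl | rfl) z (rfl | rfl) <;> exact Or.inl (by first | rfl | exact hsort | exact hsort.symm)
  have hXY : castVec '' ({x, y} : Set (Fin 4 → ℤ)) = {castVec x, castVec y} :=
    Set.image_pair _ _ _
  have hchull : convexHull ℝ (castVec '' ({x, y} : Set (Fin 4 → ℤ)))
      = segment ℝ (castVec x) (castVec y) := by rw [hXY, convexHull_pair]
  refine ⟨⟨Or.inl rfl, hdec x (Or.inl rfl)⟩, ⟨Or.inr rfl, hdec y (Or.inr rfl)⟩, ?_, ?_, ?_, ?_⟩
  · intro i; fin_cases i <;> simp [hxdef, hydef]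
  · exact ⟨0, by simp [hxdef, hydef]⟩
  · rintro ⟨-, h⟩
    set m : Fin 4 → ℝ := ![1, 1/2, 1/2, 1] with hm
    have hmem : m ∈ convexHull ℝ (castVec '' ({x, y} : Set (Fin 4 → ℤ))) := by
      rw [hchull]
      refine ⟨1/2, 1/2, by norm_num, by norm_num, by norm_num, ?_⟩
      funext i
      fin_cases i <;> simp [hm, castVec, hxdef, hydef]
    have hT : {z ∈ ({x, y} : Set (Fin 4 → ℤ)) | ∀ i, |m i - (z i : ℝ)| < 1} = ∅ := by
      ext z
      simp only [Set.mem_setOf_eq, Set.mem_empty_iff_false, iff_false, not_and]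
      rintro (rfl | rfl) hz <;>
      · have := hz 0
        rw [hm] at this
        norm_num [hxdef, hydef] at this
    have := h m hmem
    rw [hT, Set.image_empty, convexHull_empty] at this
    exact this
  · ext z
    simp only [Set.mem_setOf_eq, Set.mem_insert_iff, Set.mem_singleton_iff]
    constructor
    · intro hz
      rw [hchull] at hz
      obtain ⟨a, b, ha, hb, hab, habz⟩ := hz
      have h2 := congrFun habz 2
      have hbz : b = (z 2 : ℝ) := by
        simpa [castVec, hxdef, hydef] using h2
      have hb1 : b ≤ 1 := by linarith
      have hz2 : z 2 = 0 ∨ z 2 = 1 := by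
        have h0 : (0 : ℝ) ≤ (z 2 : ℝ) := hbz ▸ hb
        have h1 : ((z 2 : ℝ)) ≤ 1 := hbz ▸ hb1
        have h0' : (0 : ℤ) ≤ z 2 := by exact_mod_cast h0
        have h1' : z 2 ≤ 1 := by exact_mod_cast h1
        omega
      rcases hz2 with h | h
      · left
        have hb0 : b = 0 := by rw [hbz, h]; simp
        have ha1 : a = 1 := by linarith
        funext i
        have := congrFun habz i
        rw [ha1, hb0] at this
        simp only [Pi.add_apply, Pi.smul_apply, smul_eq_mul, one_mul, zero_mul, add_zero] at this
        have : (x i : ℝ) = (z i : ℝ) := this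
        exact_mod_cast this.symm
      · right
        have hb0 : b = 1 := by rw [hbz, h]; simp
        have ha1 : a = 0 := by linarith
        funext i
        have := congrFun habz i
        rw [ha1, hb0] at this
        simp only [Pi.add_apply, Pi.smul_apply, smul_eq_mul, one_mul, zero_mul, zero_add] at this
        have : (y i : ℝ) = (z i : ℝ) := this
        exact_mod_cast this.symm
    · rintro (rfl | rfl) <;>
        exact subset_convexHull ℝ _ (Set.mem_image_of_mem _ (by simp))
end

section
/- Let S ⊆ Z^n be integrally convex and let B ⊆ Z^n be an integral box (a set of the form {z ∈ Z^n : a ≤ z ≤ b} for a ≤ b in (Z ∪ {±∞})^n). Then conv(S) ∩ conv(B) = conv(S ∩ B); in particular, S ∩ B is integrally convex if nonempty. -/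
open Finset

/-!
If `x ∈ conv B` for a box `B = ∏ Pᵢ` with integer intervals `Pᵢ`, then each `xᵢ` lies between
two elements of `Pᵢ`, so every integer at distance `< 1` from `xᵢ` is squeezed between them and
hence lies in `Pᵢ`. Thus every integer neighbour `z` of `x` lies in `B`,
and integral convexity of `S` writes any `x ∈ conv S ∩ conv B` as a convex combination of points of
`S` that are neighbours of `x`, hence of points of `S ∩ B`.
-/

section OrderedHull

variable {𝕜 E : Type*} [Semiring 𝕜] [PartialOrder 𝕜] [AddCommMonoid E] [LinearOrder E]
  [IsOrderedAddMonoid E] [Module 𝕜 E] [PosSMulMono 𝕜 E] {s : Set E} {x : E}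

theorem exists_le_of_mem_convexHull (hx : x ∈ convexHull 𝕜 s) : ∃ p ∈ s, p ≤ x := by
  have hup : IsUpperSet {y : E | ∃ p ∈ s, p ≤ y} := by
    rintro _ _ hyz ⟨p, hp, hpy⟩
    exact ⟨p, hp, hpy.trans hyz⟩
  exact convexHull_min (t := {y | ∃ p ∈ s, p ≤ y}) (fun p hp => ⟨p, hp, le_rfl⟩)
    hup.ordConnected.convex hx

theorem exists_ge_of_mem_convexHull (hx : x ∈ convexHull 𝕜 s) : ∃ q ∈ s, x ≤ q := by
  have hlow : IsLowerSet {y : E | ∃ q ∈ s, y ≤ q} := by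
    rintro _ _ hzy ⟨q, hq, hyq⟩
    exact ⟨q, hq, hzy.trans hyq⟩
  exact convexHull_min (t := {y | ∃ q ∈ s, y ≤ q}) (fun q hq => ⟨q, hq, le_rfl⟩)
    hlow.ordConnected.convex hx

end OrderedHull

theorem Set.OrdConnected.mem_of_mem_convexHull_intCast {P : Set ℤ} (hP : P.OrdConnected)
    {t : ℝ} (ht : t ∈ convexHull ℝ ((↑) '' P)) {k : ℤ} (hk : |t - k| < 1) : k ∈ P := by
  obtain ⟨_, ⟨p, hp, rfl⟩, hpt⟩ := exists_le_of_mem_convexHull ht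
  obtain ⟨_, ⟨q, hq, rfl⟩, htq⟩ := exists_ge_of_mem_convexHull ht
  obtain ⟨hk₁, hk₂⟩ := abs_lt.mp hk
  have hpk : p ≤ k := Int.lt_add_one_iff.mp (by exact_mod_cast (by linarith : (p : ℝ) < k + 1))
  have hkq : k ≤ q := Int.lt_add_one_iff.mp (by exact_mod_cast (by linarith : (k : ℝ) < q + 1))
  exact hP.out hp hq ⟨hpk, hkq⟩

theorem mem_pi_of_mem_convexHull_castVec {n : ℕ} {P : Fin n → Set ℤ}
    (hP : ∀ i, (P i).OrdConnected) {x : Fin n → ℝ}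
    (hx : x ∈ convexHull ℝ (castVec '' {z | ∀ i, z i ∈ P i})) {z : Fin n → ℤ}
    (hz : ∀ i, |x i - z i| < 1) (i : Fin n) : z i ∈ P i := by
  have hxi : x i ∈ convexHull ℝ ((↑) '' P i) := by
    have := Set.mem_image_of_mem (LinearMap.proj (R := ℝ) (φ := fun _ : Fin n => ℝ) i) hx
    rw [LinearMap.image_convexHull] at this
    refine convexHull_mono ?_ this
    rintro _ ⟨_, ⟨w, hw, rfl⟩, rfl⟩
    exact ⟨w i, hw i, rfl⟩
  exact (hP i).mem_of_mem_convexHull_intCast hxi (hz i)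

section IntConvexSet

variable {n : ℕ} {S : Set (Fin n → ℤ)} {P : Fin n → Set ℤ}

theorem IntConvexSet.mem_convexHull_inter_pi (hS : IntConvexSet S)
    (hP : ∀ i, (P i).OrdConnected) {x : Fin n → ℝ} (hxS : x ∈ convexHull ℝ (castVec '' S))
    (hxB : x ∈ convexHull ℝ (castVec '' {z | ∀ i, z i ∈ P i})) :
    x ∈ convexHull ℝ (castVec '' {z ∈ S ∩ {z | ∀ i, z i ∈ P i} | ∀ i, |x i - z i| < 1}) := by
  refine convexHull_mono (Set.image_mono ?_) (hS.2 x hxS)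
  rintro z ⟨hzS, hzx⟩
  exact ⟨⟨hzS, mem_pi_of_mem_convexHull_castVec hP hxB hzx⟩, hzx⟩

theorem IntConvexSet.convexHull_inter_pi (hS : IntConvexSet S) (hP : ∀ i, (P i).OrdConnected) :
    convexHull ℝ (castVec '' S) ∩ convexHull ℝ (castVec '' {z | ∀ i, z i ∈ P i}) =
      convexHull ℝ (castVec '' (S ∩ {z | ∀ i, z i ∈ P i})) := by
  refine subset_antisymm (fun x ⟨hxS, hxB⟩ => ?_) (Set.subset_inter
    (convexHull_mono (Set.image_mono Set.inter_subset_left))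
    (convexHull_mono (Set.image_mono Set.inter_subset_right)))
  exact convexHull_mono (Set.image_mono fun _ hz => hz.1) (hS.mem_convexHull_inter_pi hP hxS hxB)

theorem IntConvexSet.inter_pi (hS : IntConvexSet S) (hP : ∀ i, (P i).OrdConnected)
    (hne : (S ∩ {z | ∀ i, z i ∈ P i}).Nonempty) : IntConvexSet (S ∩ {z | ∀ i, z i ∈ P i}) := by
  refine ⟨hne, fun x hx => ?_⟩
  rw [← hS.convexHull_inter_pi hP] at hx
  exact hS.mem_convexHull_inter_pi hP hx.1 hx.2

end IntConvexSet

theorem intconvex_cap_box_general (n : ℕ) (S : Set (Fin n → ℤ)) (hS : IntConvexSet S)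
    (a b : Fin n → EReal)
    (B : Set (Fin n → ℤ))
    (hB : B = {z : Fin n → ℤ | ∀ i, a i ≤ ((z i : ℝ) : EReal) ∧ ((z i : ℝ) : EReal) ≤ b i}) :
    convexHull ℝ (castVec '' S) ∩ convexHull ℝ (castVec '' B) =
      convexHull ℝ (castVec '' (S ∩ B)) ∧
    ((S ∩ B).Nonempty → IntConvexSet (S ∩ B)) := by
  have hP : ∀ i, (((fun k : ℤ => ((k : ℝ) : EReal)) ⁻¹' Set.Icc (a i) (b i))).OrdConnected :=
    fun i => Set.ordConnected_Icc.preimage_mono fun _ _ h => by exact_mod_cast h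
  subst hB
  exact ⟨hS.convexHull_inter_pi hP, hS.inter_pi hP⟩

theorem intconvex_cap_box (n : ℕ) (S : Set (Fin n → ℤ)) (hS : IntConvexSet S)
    (a b : Fin n → EReal) (hab : ∀ i, a i ≤ b i)
    (B : Set (Fin n → ℤ))
    (hB : B = {z : Fin n → ℤ | ∀ i, a i ≤ ((z i : ℝ) : EReal) ∧ ((z i : ℝ) : EReal) ≤ b i}) :
    convexHull ℝ (castVec '' S) ∩ convexHull ℝ (castVec '' B) =
      convexHull ℝ (castVec '' (S ∩ B)) ∧
    ((S ∩ B).Nonempty → IntConvexSet (S ∩ B)) :=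
  intconvex_cap_box_general n S hS a b B hB
end
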